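/- Fix ε ∈ (0,1/2) and let α ∈ (0,1) be such that α(1−α)² = 2ε. Then for every sufficiently large finite set 𝒳 there exists a joint distribution p_{XYMN} over 𝒳×𝒳×𝒳×𝒳 such that: Y = X (p puts mass only on tuples with y = x); M and N are conditionally independent given X (p(x,x,m,n) = p_X(x)·p_{M|X=x}(m)·p_{N|X=x}(n)); the entropy satisfies H(M,N) ≤ (1−α³)·log|𝒳| + 3; every real c' satisfying Pr_{(x,y,m,n)~p}[ (p_{M|X=x}(m)·p_{N|Y=y}(n))/p_{MN}(m,n) ≤ 2^{c'} ] ≥ 1−ε satisfies c' ≥ log|𝒳| − 3; and consequently every such c' satisfies H(M,N)/c' ≤ 7√ε. -/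

import Mathlib

open Finset Real
open scoped Classical

noncomputable section

/-- Marginal on `X` of a joint distribution on `𝒳⁴` (coordinates `(x, y, m, n)`). -/
def margX4 {𝒳 : Type*} [Fintype 𝒳] (p : 𝒳 → 𝒳 → 𝒳 → 𝒳 → ℝ) (x : 𝒳) : ℝ :=
  ∑ y, ∑ m, ∑ n, p x y m n

/-- Marginal on `Y`. -/
def margY4 {𝒳 : Type*} [Fintype 𝒳] (p : 𝒳 → 𝒳 → 𝒳 → 𝒳 → ℝ) (y : 𝒳) : ℝ :=
  ∑ x, ∑ m, ∑ n, p x y m n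

/-- Marginal on `(X, M)`. -/
def margXM4 {𝒳 : Type*} [Fintype 𝒳] (p : 𝒳 → 𝒳 → 𝒳 → 𝒳 → ℝ) (x m : 𝒳) : ℝ :=
  ∑ y, ∑ n, p x y m n

/-- Marginal on `(Y, N)`. -/
def margYN4 {𝒳 : Type*} [Fintype 𝒳] (p : 𝒳 → 𝒳 → 𝒳 → 𝒳 → ℝ) (y n : 𝒳) : ℝ :=
  ∑ x, ∑ m, p x y m n

/-- Marginal on `(X, N)`. -/
def margXN4 {𝒳 : Type*} [Fintype 𝒳] (p : 𝒳 → 𝒳 → 𝒳 → 𝒳 → ℝ) (x n : 𝒳) : ℝ :=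
  ∑ y, ∑ m, p x y m n

/-- Marginal on `(M, N)`. -/
def margMN4 {𝒳 : Type*} [Fintype 𝒳] (p : 𝒳 → 𝒳 → 𝒳 → 𝒳 → ℝ) (m n : 𝒳) : ℝ :=
  ∑ x, ∑ y, p x y m n

/-- Entropy `H(M,N)` (base-2 logarithms). -/
def entMN4 {𝒳 : Type*} [Fintype 𝒳] (p : 𝒳 → 𝒳 → 𝒳 → 𝒳 → ℝ) : ℝ :=
  -∑ m, ∑ n, margMN4 p m n * logb 2 (margMN4 p m n)

/-!
Let `X` be uniform on `𝒳`, `Y = X`, and given `X = x` let `M` and `N` be independent, each equal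
to `x` with probability `β = √(2ε)` and to a fixed point `o` otherwise. Apart from `(o, o)`, the
pair `(M, N)` lives on about `2|𝒳|` atoms of mass `β(1-β)/|𝒳|` and `|𝒳|` atoms of mass `β²/|𝒳|`,
so `H(M,N) ≤ (2β - β²) log|𝒳| + 3`, and `2β - β² ≤ 1 - α³` because `β = √α (1-α)`.
On the atoms `(x, x, x, x)` with `x ≠ o` the likelihood ratio is `β·β / (β²/|𝒳|) = |𝒳|`, and these
atoms carry mass `(1 - 1/|𝒳|)·2ε > ε`; hence every admissible `c'` has `2^c' ≥ |𝒳|`. Once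
`log|𝒳| ≥ 3/(4√ε)` the additive constant is absorbed and `H(M,N)/c' ≤ 7√ε`.
-/

namespace EntropyRatioCounterexample

lemma neg_mul_logb_two_le {t : ℝ} (ht : 0 ≤ t) : -(t * logb 2 t) ≤ 3 / 4 := by
  rcases ht.eq_or_lt with rfl | ht
  · norm_num
  have h_log : -(t * log t) ≤ exp (-1) := by
    simpa [exp_log ht, mul_comm] using mul_exp_neg_le_exp_neg_one (-log t)
  have h_exp : exp (-1) < 1 / 2 := by
    rw [exp_neg, inv_lt_comm₀ (exp_pos 1) (by norm_num)]
    linarith [exp_one_gt_d9]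
  rw [logb, ← mul_div_assoc, ← neg_div, div_le_iff₀ (log_pos one_lt_two)]
  linarith [log_two_gt_d9]

-- The entropy contribution of `n - 1` atoms of mass `c / n`.
lemma sub_one_mul_neg_mul_logb_le {n c : ℝ} (hn : 1 ≤ n) (hc₀ : 0 < c) (hc₁ : c ≤ 1) :
    (n - 1) * -(n⁻¹ * c * logb 2 (n⁻¹ * c)) ≤ c * logb 2 n + 3 / 4 := by
  have hn₀ : 0 < n := by linarith
  have h_split : (n - 1) * -(n⁻¹ * c * logb 2 (n⁻¹ * c))
      = (1 - n⁻¹) * (c * logb 2 n + -(c * logb 2 c)) := by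
    rw [logb_mul (inv_ne_zero hn₀.ne') hc₀.ne', logb_inv]
    field_simp
    ring
  have h_ent_nonneg : 0 ≤ -(c * logb 2 c) :=
    neg_nonneg.2 (mul_nonpos_of_nonneg_of_nonpos hc₀.le (logb_nonpos one_lt_two hc₀.le hc₁))
  have h_bracket : 0 ≤ c * logb 2 n + -(c * logb 2 c) :=
    add_nonneg (mul_nonneg hc₀.le (logb_nonneg one_lt_two hn)) h_ent_nonneg
  have h_coef : 1 - n⁻¹ ≤ 1 := sub_le_self _ (inv_nonneg.2 hn₀.le)
  rw [h_split]
  nlinarith [neg_mul_logb_two_le hc₀.le]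

lemma two_mul_sub_sq_le_one_sub_pow_three {α : ℝ} (h₀ : 0 ≤ α) (h₁ : α ≤ 1) :
    2 * (√α * (1 - α)) - (√α * (1 - α)) ^ 2 ≤ 1 - α ^ 3 := by
  obtain ⟨s, hs, rfl⟩ : ∃ s, 0 ≤ s ∧ s ^ 2 = α := ⟨√α, sqrt_nonneg α, sq_sqrt h₀⟩
  rw [sqrt_sq hs]
  nlinarith [mul_nonneg (sq_nonneg (1 - s)) (by nlinarith : (0:ℝ) ≤ 1 - s ^ 2),
    mul_nonneg (pow_nonneg hs 4) (by nlinarith : (0:ℝ) ≤ 1 - s ^ 2),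
    sq_nonneg (s * (1 - s ^ 2))]

lemma le_logb_two_of_two_pow_nat_ceil_le {t : ℝ} {N : ℕ} (h : 2 ^ ⌈t⌉₊ ≤ N) : t ≤ logb 2 N := by
  have hN : (0 : ℝ) < N := by exact_mod_cast (Nat.one_le_two_pow).trans h
  rw [le_logb_iff_rpow_le one_lt_two hN]
  calc (2 : ℝ) ^ t ≤ 2 ^ (⌈t⌉₊ : ℝ) := rpow_le_rpow_of_exponent_le one_le_two (Nat.le_ceil t)
    _ ≤ N := by rw [rpow_natCast]; exact_mod_cast h

lemma div_le_seven_mul_sqrt {ε L H c : ℝ} (hε : 0 < ε) (hL : 3 / (4 * √ε) ≤ L)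
    (hH : H ≤ (2 * √(2 * ε) - √(2 * ε) ^ 2) * L + 3) (hc : L ≤ c) : H / c ≤ 7 * √ε := by
  have hsε : 0 < √ε := sqrt_pos.2 hε
  have hL₀ : 0 < L := lt_of_lt_of_le (by positivity) hL
  have h_const : 3 ≤ 4 * √ε * L := by rwa [div_le_iff₀' (by positivity)] at hL
  have h_lin : 2 * √(2 * ε) ≤ 3 * √ε := by
    rw [sqrt_mul zero_le_two]
    nlinarith [sq_sqrt zero_le_two, sqrt_nonneg 2]
  rw [div_le_iff₀ (hL₀.trans_le hc)]
  nlinarith [sq_nonneg √(2 * ε)]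

lemma sum_ite_eq_add_card_sub_one_mul {𝒳 : Type*} [Fintype 𝒳] (o : 𝒳) (a b : ℝ) :
    ∑ x : 𝒳, (if x = o then a else b) = a + ((Fintype.card 𝒳 : ℝ) - 1) * b := by
  rw [Fintype.sum_eq_add_sum_compl o, if_pos rfl,
    sum_congr rfl fun x hx => if_neg (by simpa using hx)]
  simp [card_compl, Nat.cast_sub (Fintype.card_pos_iff.2 ⟨o⟩)]

lemma entMN4_eq_of_margMN4_eq {𝒳 : Type*} [Fintype 𝒳] {p : 𝒳 → 𝒳 → 𝒳 → 𝒳 → ℝ} (o : 𝒳)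
    {a b c : ℝ} (h : ∀ m n, margMN4 p m n =
      if m = o then (if n = o then a else b) else if n = o then b else if n = m then c else 0) :
    entMN4 p = -(a * logb 2 a) - 2 * ((Fintype.card 𝒳 : ℝ) - 1) * (b * logb 2 b)
      - ((Fintype.card 𝒳 : ℝ) - 1) * (c * logb 2 c) := by
  have h_row : ∀ m, ∑ n, margMN4 p m n * logb 2 (margMN4 p m n) =
      if m = o then a * logb 2 a + ((Fintype.card 𝒳 : ℝ) - 1) * (b * logb 2 b)
      else b * logb 2 b + c * logb 2 c := by
    intro m
    split_ifs with hm
    · rw [← sum_ite_eq_add_card_sub_one_mul o]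
      refine sum_congr rfl fun n _ => ?_
      rw [h, if_pos hm]
      split_ifs <;> rfl
    · have h_pt : ∀ n, margMN4 p m n * logb 2 (margMN4 p m n) =
          (if n = o then b * logb 2 b else 0) + (if n = m then c * logb 2 c else 0) := by
        intro n
        rw [h, if_neg hm]
        split_ifs with hn hnm <;> simp_all
      simp [h_pt, sum_add_distrib]
  rw [entMN4, sum_congr rfl fun m _ => h_row m, sum_ite_eq_add_card_sub_one_mul]
  ring

lemma sum_ite_le_sub_sum_diag {ι : Type*} [Fintype ι] (f : ι → ι → ι → ι → ℝ)
    (hf : ∀ x y m n, 0 ≤ f x y m n) (P : ι → ι → ι → ι → Prop)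
    [∀ x y m n, Decidable (P x y m n)] (s : Finset ι) (hs : ∀ x ∈ s, ¬ P x x x x) :
    ∑ x, ∑ y, ∑ m, ∑ n, (if P x y m n then f x y m n else 0) ≤
      ∑ x, ∑ y, ∑ m, ∑ n, f x y m n - ∑ x ∈ s, f x x x x := by
  set g : ι → ι → ι → ι → ℝ := fun x y m n => f x y m n - if P x y m n then f x y m n else 0
  have hg : ∀ x y m n, 0 ≤ g x y m n := fun x y m n => by
    simp only [g]; split_ifs <;> linarith [hf x y m n]
  have h_diag : ∀ x ∈ s, f x x x x ≤ ∑ y, ∑ m, ∑ n, g x y m n := fun x hx =>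
    calc f x x x x = g x x x x := by simp [g, hs x hx]
      _ ≤ ∑ n, g x x x n := single_le_sum (fun n _ => hg x x x n) (mem_univ x)
      _ ≤ ∑ m, ∑ n, g x x m n :=
        single_le_sum (fun m _ => sum_nonneg fun n _ => hg x x m n) (mem_univ x)
      _ ≤ ∑ y, ∑ m, ∑ n, g x y m n :=
        single_le_sum (fun y _ => sum_nonneg fun m _ => sum_nonneg fun n _ => hg x y m n)
          (mem_univ x)
  have h_sum : ∑ x ∈ s, f x x x x ≤ ∑ x, ∑ y, ∑ m, ∑ n, g x y m n :=
    (sum_le_sum h_diag).trans <| sum_le_sum_of_subset_of_nonneg (subset_univ s)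
      fun x _ _ => sum_nonneg fun y _ => sum_nonneg fun m _ => sum_nonneg fun n _ => hg x y m n
  simp only [g, sum_sub_distrib] at h_sum
  linarith

def likelihoodRatio {𝒳 : Type*} [Fintype 𝒳] (p : 𝒳 → 𝒳 → 𝒳 → 𝒳 → ℝ) (x y m n : 𝒳) : ℝ :=
  margXM4 p x m / margX4 p x * (margYN4 p y n / margY4 p y) / margMN4 p m n

section DiagJoint

variable {𝒳 : Type*} [Fintype 𝒳]

/-- The law of `(X, X, M, N)` for `X` uniform and `M`, `N` independent with law `q x` given
`X = x`. -/
def diagJoint (q : 𝒳 → 𝒳 → ℝ) (x y m n : 𝒳) : ℝ :=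
  if y = x then (Fintype.card 𝒳 : ℝ)⁻¹ * (q x m * q x n) else 0

variable (q : 𝒳 → 𝒳 → ℝ)

lemma diagJoint_of_ne {x y : 𝒳} (h : y ≠ x) (m n : 𝒳) : diagJoint q x y m n = 0 := if_neg h

lemma diagJoint_nonneg (hq : ∀ x m, 0 ≤ q x m) (x y m n : 𝒳) : 0 ≤ diagJoint q x y m n := by
  unfold diagJoint
  split_ifs
  · have := hq x m; have := hq x n; positivity
  · rfl

variable {q}

lemma margX4_diagJoint (hq : ∀ x, ∑ m, q x m = 1) (x : 𝒳) :
    margX4 (diagJoint q) x = (Fintype.card 𝒳 : ℝ)⁻¹ := by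
  simp [margX4, diagJoint, ← mul_sum, hq]

lemma margY4_diagJoint (hq : ∀ x, ∑ m, q x m = 1) (y : 𝒳) :
    margY4 (diagJoint q) y = (Fintype.card 𝒳 : ℝ)⁻¹ := by
  simp [margY4, diagJoint, ← mul_sum, hq]

lemma margXM4_diagJoint (hq : ∀ x, ∑ m, q x m = 1) (x m : 𝒳) :
    margXM4 (diagJoint q) x m = (Fintype.card 𝒳 : ℝ)⁻¹ * q x m := by
  simp [margXM4, diagJoint, ← mul_sum, hq]

lemma margXN4_diagJoint (hq : ∀ x, ∑ m, q x m = 1) (x n : 𝒳) :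
    margXN4 (diagJoint q) x n = (Fintype.card 𝒳 : ℝ)⁻¹ * q x n := by
  simp [margXN4, diagJoint, ← mul_sum, ← sum_mul, hq]

lemma margYN4_diagJoint (hq : ∀ x, ∑ m, q x m = 1) (y n : 𝒳) :
    margYN4 (diagJoint q) y n = (Fintype.card 𝒳 : ℝ)⁻¹ * q y n := by
  simp [margYN4, diagJoint, ← mul_sum, ← sum_mul, hq]

lemma margMN4_diagJoint (m n : 𝒳) :
    margMN4 (diagJoint q) m n = (Fintype.card 𝒳 : ℝ)⁻¹ * ∑ x, q x m * q x n := by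
  simp [margMN4, diagJoint, ← mul_sum]

lemma diagJoint_self_eq_mul_cond (hq : ∀ x, ∑ m, q x m = 1) (x m n : 𝒳) :
    diagJoint q x x m n = margX4 (diagJoint q) x *
      (margXM4 (diagJoint q) x m / margX4 (diagJoint q) x) *
      (margXN4 (diagJoint q) x n / margX4 (diagJoint q) x) := by
  have : Nonempty 𝒳 := ⟨x⟩
  have hN : (Fintype.card 𝒳 : ℝ)⁻¹ ≠ 0 := inv_ne_zero (Nat.cast_ne_zero.2 Fintype.card_ne_zero)
  rw [margX4_diagJoint hq, margXM4_diagJoint hq, margXN4_diagJoint hq, mul_div_cancel_left₀ _ hN,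
    mul_div_cancel_left₀ _ hN, diagJoint, if_pos rfl, mul_assoc]

lemma sum_diagJoint [Nonempty 𝒳] (hq : ∀ x, ∑ m, q x m = 1) :
    ∑ x, ∑ y, ∑ m, ∑ n, diagJoint q x y m n = 1 := by
  simp_rw [← margX4.eq_def, margX4_diagJoint hq]
  simp

end DiagJoint

section SpikeKernel

variable {𝒳 : Type*} (o : 𝒳)

def spikeKernel (β : ℝ) (x m : 𝒳) : ℝ := (if m = x then β else 0) + (if m = o then 1 - β else 0)

lemma spikeKernel_nonneg {β : ℝ} (hβ₀ : 0 ≤ β) (hβ₁ : β ≤ 1) (x m : 𝒳) :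
    0 ≤ spikeKernel o β x m := by
  unfold spikeKernel
  split_ifs <;> linarith

variable [Fintype 𝒳]

lemma sum_spikeKernel (β : ℝ) (x : 𝒳) : ∑ m, spikeKernel o β x m = 1 := by
  simp [spikeKernel, sum_add_distrib]

lemma sum_spikeKernel_mul (β : ℝ) (m n : 𝒳) :
    ∑ x, spikeKernel o β x m * spikeKernel o β x n =
      if m = o then (if n = o then 1 + (Fintype.card 𝒳 - 1) * (1 - β) ^ 2 else β * (1 - β))
      else if n = o then β * (1 - β) else if n = m then β ^ 2 else 0 := by
  simp only [spikeKernel, add_mul, mul_add, ite_mul, mul_ite, mul_zero, zero_mul,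
    sum_add_distrib, sum_ite_irrel, sum_ite_eq, mem_univ, if_true, sum_const_zero, sum_const,
    card_univ, nsmul_eq_mul]
  rcases eq_or_ne m o with rfl | hm
  · rcases eq_or_ne n m with rfl | hn
    · simp only [if_true]; ring
    · simp [hn, Ne.symm hn, mul_comm]
  · rcases eq_or_ne n o with rfl | hn
    · simp [hm]
    · rcases eq_or_ne n m with rfl | hnm
      · simp [hn]; ring
      · simp [hm, hn, hnm, Ne.symm hnm]

variable {β : ℝ}

lemma margMN4_diagJoint_spikeKernel (m n : 𝒳) :
    margMN4 (diagJoint (spikeKernel o β)) m n =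
      if m = o then
        (if n = o then (Fintype.card 𝒳 : ℝ)⁻¹ * (1 + (Fintype.card 𝒳 - 1) * (1 - β) ^ 2)
        else (Fintype.card 𝒳 : ℝ)⁻¹ * (β * (1 - β)))
      else if n = o then (Fintype.card 𝒳 : ℝ)⁻¹ * (β * (1 - β))
      else if n = m then (Fintype.card 𝒳 : ℝ)⁻¹ * β ^ 2 else 0 := by
  simp only [margMN4_diagJoint, sum_spikeKernel_mul, mul_ite, mul_zero]

lemma entMN4_diagJoint_spikeKernel_le (hβ₀ : 0 < β) (hβ₁ : β < 1) :
    entMN4 (diagJoint (spikeKernel o β)) ≤ (2 * β - β ^ 2) * logb 2 (Fintype.card 𝒳) + 3 := by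
  set N : ℝ := (Fintype.card 𝒳 : ℝ)
  have hN : 1 ≤ N := Nat.one_le_cast.2 (Fintype.card_pos_iff.2 ⟨o⟩)
  have hA := neg_mul_logb_two_le (t := N⁻¹ * (1 + (N - 1) * (1 - β) ^ 2)) (by positivity)
  have hB := sub_one_mul_neg_mul_logb_le hN (c := β * (1 - β)) (by nlinarith) (by nlinarith)
  have hC := sub_one_mul_neg_mul_logb_le hN (c := β ^ 2) (by positivity) (by nlinarith)
  rw [entMN4_eq_of_margMN4_eq o (margMN4_diagJoint_spikeKernel o)]
  linarith

lemma likelihoodRatio_diagJoint_spikeKernel_self (hβ : β ≠ 0) {x : 𝒳} (hx : x ≠ o) :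
    likelihoodRatio (diagJoint (spikeKernel o β)) x x x x = Fintype.card 𝒳 := by
  have : Nonempty 𝒳 := ⟨x⟩
  have hN : (Fintype.card 𝒳 : ℝ) ≠ 0 := Nat.cast_ne_zero.2 Fintype.card_ne_zero
  have hq := sum_spikeKernel o β
  rw [likelihoodRatio, margXM4_diagJoint hq, margX4_diagJoint hq, margYN4_diagJoint hq,
    margY4_diagJoint hq, margMN4_diagJoint_spikeKernel]
  simp [spikeKernel, hx]
  field_simp

lemma card_le_two_rpow_of_le_sum_ite (hβ₀ : 0 < β) (hβ₁ : β < 1) (hcard : 2 < Fintype.card 𝒳)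
    {c : ℝ} (h : 1 - β ^ 2 / 2 ≤ ∑ x, ∑ y, ∑ m, ∑ n,
      if likelihoodRatio (diagJoint (spikeKernel o β)) x y m n ≤ 2 ^ c
      then diagJoint (spikeKernel o β) x y m n else 0) :
    (Fintype.card 𝒳 : ℝ) ≤ 2 ^ c := by
  have : Nonempty 𝒳 := ⟨o⟩
  set N : ℝ := (Fintype.card 𝒳 : ℝ)
  by_contra! hlt
  have h_fail : ∀ x ∈ ({o}ᶜ : Finset 𝒳),
      ¬ likelihoodRatio (diagJoint (spikeKernel o β)) x x x x ≤ 2 ^ c := fun x hx => by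
    rw [likelihoodRatio_diagJoint_spikeKernel_self o hβ₀.ne' (by simpa using hx)]
    exact not_le.2 hlt
  have h_diag : ∑ x ∈ ({o}ᶜ : Finset 𝒳), diagJoint (spikeKernel o β) x x x x
      = (N - 1) * (N⁻¹ * β ^ 2) := by
    rw [sum_congr rfl fun x hx => show diagJoint (spikeKernel o β) x x x x = N⁻¹ * β ^ 2 by
      simp [diagJoint, spikeKernel, (by simpa using hx : x ≠ o), sq, N]]
    simp [card_compl, Nat.cast_sub Fintype.card_pos, N]
  have := sum_ite_le_sub_sum_diag _ (diagJoint_nonneg _ (spikeKernel_nonneg o hβ₀.le hβ₁.le))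
    (fun x y m n => likelihoodRatio (diagJoint (spikeKernel o β)) x y m n ≤ 2 ^ c) _ h_fail
  rw [sum_diagJoint (sum_spikeKernel o β), h_diag] at this
  have hN : (3 : ℝ) ≤ N := by simp only [N]; exact_mod_cast hcard
  have : (N - 1) * (N⁻¹ * β ^ 2) > β ^ 2 / 2 := by
    rw [gt_iff_lt, ← sub_pos]
    field_simp
    nlinarith [sq_pos_of_pos hβ₀]
  linarith

end SpikeKernel

end EntropyRatioCounterexample

open EntropyRatioCounterexample

/-- Claim 3.1, counterexample: fix `ε ∈ (0, 1/2)` and `α ∈ (0,1)`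
with `α(1−α)² = 2ε`.  For every sufficiently large finite set `𝒳` (modelled as
`Fin N`) there is a joint distribution `p_{XYMN}` on `𝒳⁴` with `Y = X`, with `M, N`
conditionally independent given `X`, with `H(M,N) ≤ (1−α³) log|𝒳| + 3`, and such that
every `c'` with `Pr[(p_{M|X=x}(m)·p_{N|Y=y}(n))/p_{MN}(m,n) ≤ 2^{c'}] ≥ 1−ε` satisfies
`c' ≥ log|𝒳| − 3`, and consequently `H(M,N)/c' ≤ 7√ε`. -/
theorem counterexample_entropy_ratio
    (ε : ℝ) (hε : ε ∈ Set.Ioo (0:ℝ) (1/2))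
    (α : ℝ) (hα : α ∈ Set.Ioo (0:ℝ) 1) (hαε : α * (1 - α) ^ 2 = 2 * ε) :
    ∃ N₀ : ℕ, ∀ N : ℕ, N₀ ≤ N →
    ∃ p : Fin N → Fin N → Fin N → Fin N → ℝ,
      (∀ x y m n, 0 ≤ p x y m n) ∧
      (∑ x, ∑ y, ∑ m, ∑ n, p x y m n) = 1 ∧
      -- `Y = X`
      (∀ x y m n, y ≠ x → p x y m n = 0) ∧
      -- `M` and `N` are conditionally independent given `X`
      (∀ x m n, 0 < margX4 p x →
        p x x m n = margX4 p x * (margXM4 p x m / margX4 p x) *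
          (margXN4 p x n / margX4 p x)) ∧
      -- entropy upper bound
      entMN4 p ≤ (1 - α ^ 3) * logb 2 (N : ℝ) + 3 ∧
      -- every valid `c'` is large, hence the ratio `H(M,N)/c'` is small
      (∀ c' : ℝ,
        (1 - ε ≤ ∑ x, ∑ y, ∑ m, ∑ n,
          (if (margXM4 p x m / margX4 p x) * (margYN4 p y n / margY4 p y) /
              margMN4 p m n ≤ (2 : ℝ) ^ c'
            then p x y m n else 0)) →
        (logb 2 (N : ℝ) - 3 ≤ c' ∧ entMN4 p / c' ≤ 7 * Real.sqrt ε)) := by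
  obtain ⟨hε₀, hε₁⟩ := hε
  obtain ⟨hα₀, hα₁⟩ := hα
  have hβα : √(2 * ε) = √α * (1 - α) := by rw [← hαε, sqrt_mul hα₀.le, sqrt_sq (by linarith)]
  set β := √(2 * ε)
  have hβ₀ : 0 < β := sqrt_pos.2 (by linarith)
  have hβ₁ : β < 1 := (sqrt_lt' one_pos).2 (by linarith)
  refine ⟨2 ^ ⌈3 / (4 * √ε)⌉₊ + 3, fun N hN => ?_⟩
  have hpow := Nat.one_le_two_pow (n := ⌈3 / (4 * √ε)⌉₊)
  have : NeZero N := ⟨by omega⟩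
  have hcard : 2 < Fintype.card (Fin N) := by rw [Fintype.card_fin]; omega
  have hL : 3 / (4 * √ε) ≤ logb 2 N := le_logb_two_of_two_pow_nat_ceil_le (by omega)
  have hent := entMN4_diagJoint_spikeKernel_le (0 : Fin N) hβ₀ hβ₁
  rw [Fintype.card_fin] at hent
  have hq := sum_spikeKernel (0 : Fin N) β
  refine ⟨diagJoint (spikeKernel 0 β), diagJoint_nonneg _ (spikeKernel_nonneg 0 hβ₀.le hβ₁.le),
    sum_diagJoint hq, fun x y m n h => diagJoint_of_ne _ h m n,
    fun x m n _ => diagJoint_self_eq_mul_cond hq x m n, ?_, fun c' hc' => ?_⟩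
  · have hL₀ : 0 ≤ logb 2 N := hL.trans' (by positivity)
    refine hent.trans ?_
    gcongr ?_ * _ + _
    rw [hβα]
    exact two_mul_sub_sq_le_one_sub_pow_three hα₀.le hα₁.le
  · have hc : logb 2 N ≤ c' := by
      rw [logb_le_iff_le_rpow one_lt_two (by exact_mod_cast (NeZero.pos N)), ← Fintype.card_fin N]
      refine card_le_two_rpow_of_le_sum_ite 0 hβ₀ hβ₁ hcard ?_
      rwa [sq_sqrt (by linarith), mul_div_cancel_left₀ _ two_ne_zero]
    exact ⟨by linarith, div_le_seven_mul_sqrt hε₀ hL hent hc⟩
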